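/- Let m ≥ 2 and let A be a real m×m matrix with a_{ij} ≥ 0 for all i ≠ j and zero row sums, let ε > 0, and let Ã be the matrix obtained from A by replacing a_{11} with a_{11} − ε. Suppose λ ∈ ℝ and v ∈ ℝᵐ satisfy Ãv = λv, v₁ > 0, and |v_j| ≤ v₁ for all j = 1, …, m. Then λ ≤ −ε; in particular λ < 0. -/

import Mathlib

/-! Read off the first coordinate of `Ã v = λ v`. Because `v₁` dominates every `v_j` and the
off-diagonal entries are nonnegative, `(A v)₁ ≤ (∑ⱼ a₁ⱼ) v₁ = 0`, so `λ v₁ = (A v)₁ - ε v₁ ≤ -ε v₁`;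
divide by `v₁ > 0`. -/

open Matrix BigOperators

namespace Matrix

variable {ι R : Type*} [Fintype ι] [Ring R]

theorem mulVec_apply_of_diag_sub [DecidableEq ι] (A B : Matrix ι ι R) (v : ι → R) (i : ι)
    (ε : R) (hB : ∀ j, B i j = if j = i then A i j - ε else A i j) :
    (B *ᵥ v) i = (A *ᵥ v) i - ε * v i := calc
  ∑ j, B i j * v j = ∑ j, (A i j * v j - if j = i then ε * v i else 0) :=
    Finset.sum_congr rfl fun j _ => by
      by_cases hji : j = i <;> simp [hB, sub_mul, hji]
  _ = (A *ᵥ v) i - ε * v i := by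
    rw [Finset.sum_sub_distrib, Finset.sum_ite_eq']
    simp [mulVec, dotProduct]

variable [LinearOrder R] [IsOrderedRing R]

theorem mulVec_apply_le_sum_mul_of_le (A : Matrix ι ι R) (v : ι → R) (i : ι)
    (hoff : ∀ j, j ≠ i → 0 ≤ A i j) (hv : ∀ j, v j ≤ v i) :
    (A *ᵥ v) i ≤ (∑ j, A i j) * v i := by
  rw [mulVec, dotProduct, Finset.sum_mul]
  refine Finset.sum_le_sum fun j _ => ?_
  rcases eq_or_ne j i with rfl | hji
  · rfl
  · exact mul_le_mul_of_nonneg_left (hv j) (hoff j hji)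

end Matrix

/-- If `λ` is an eigenvalue of the pinned matrix `Ã` with a real eigenvector whose
first component is positive and maximal in absolute value, then `λ ≤ -ε < 0`. -/
theorem stmt_1 (m : ℕ) (hm : 2 ≤ m) (A : Matrix (Fin m) (Fin m) ℝ)
    (hoff : ∀ i j : Fin m, i ≠ j → 0 ≤ A i j)
    (hrow : ∀ i : Fin m, ∑ j, A i j = 0)
    (ε : ℝ) (hε : 0 < ε)
    (Atil : Matrix (Fin m) (Fin m) ℝ)
    (hAtil : ∀ i j : Fin m, Atil i j =
      if i = (⟨0, by omega⟩ : Fin m) ∧ j = (⟨0, by omega⟩ : Fin m) then A i j - ε else A i j)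
    (lam : ℝ) (v : Fin m → ℝ)
    (heig : Atil *ᵥ v = lam • v)
    (hv1 : 0 < v ⟨0, by omega⟩)
    (hmax : ∀ j : Fin m, |v j| ≤ v ⟨0, by omega⟩) :
    lam ≤ -ε ∧ lam < 0 := by
  set i0 : Fin m := ⟨0, by omega⟩
  have hAv : (A *ᵥ v) i0 ≤ 0 := by
    simpa [hrow i0] using A.mulVec_apply_le_sum_mul_of_le v i0 (fun j hj => hoff i0 j hj.symm)
      fun j => (le_abs_self _).trans (hmax j)
  have hAtilv : (Atil *ᵥ v) i0 = (A *ᵥ v) i0 - ε * v i0 :=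
    A.mulVec_apply_of_diag_sub Atil v i0 ε fun j => by simp [hAtil]
  have hkey : lam * v i0 ≤ -ε * v i0 := by
    rw [← smul_eq_mul, ← Pi.smul_apply, ← heig, hAtilv]
    linarith
  have hle : lam ≤ -ε := le_of_mul_le_mul_right hkey hv1
  exact ⟨hle, hle.trans_lt (neg_neg_of_pos hε)⟩
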